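/- arXiv:1809.05575 — 4 statements merged into one kernel-verified Lean document; each statement's English description precedes it below -/
import Mathlib

section
/- For continuous-time S-synergy with k ≥ 2, the conditions R(0) = R'(0) = R''(0) = 0 for the rate function R(p) = -μ p + (1-p) α k p ((1-p)e^β + p)^{k-1} are satisfied exactly at the point α/μ = (1/k)(k/(k-1))^{k-1} and β = ln((k-1)/k). -/
/-!
Writing `R p = p * H p` with `H p = -μ + α k (1 - p) ((1 - p) E + p) ^ (k - 1)` and `E = exp β`,
we always have `R 0 = 0`, while `R' 0 = H 0 = -μ + α k E ^ (k - 1)` and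
`R'' 0 = 2 H' 0 = 2 α k E ^ (k - 2) ((k - 1) - k E)`. So `R'' 0 = 0` pins `E = (k - 1) / k`,
and then `R' 0 = 0` pins `α / μ = (k E ^ (k - 1))⁻¹`.
-/

open Real

section
variable {𝕜 : Type*} [NontriviallyNormedField 𝕜] {h : 𝕜 → 𝕜}

theorem deriv_id_mul (hh : Differentiable 𝕜 h) :
    deriv (fun p => p * h p) = fun p => h p + p * deriv h p := by
  funext p
  simpa using ((hasDerivAt_id' p).fun_mul (hh p).hasDerivAt).deriv

theorem deriv_deriv_id_mul_zero (hh : ContDiff 𝕜 2 h) :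
    deriv (deriv fun p => p * h p) 0 = 2 * deriv h 0 := by
  rw [deriv_id_mul (hh.differentiable two_ne_zero)]
  have hd := ((hh.differentiable two_ne_zero) 0).hasDerivAt.fun_add
    ((hasDerivAt_id' 0).fun_mul (hh.differentiable_deriv_two 0).hasDerivAt)
  simpa [two_mul] using hd.deriv

theorem hasDerivAt_one_sub_mul_pow_succ_zero (E : 𝕜) (n : ℕ) :
    HasDerivAt (fun p => (1 - p) * ((1 - p) * E + p) ^ (n + 1))
      (-E ^ (n + 1) + (n + 1) * E ^ n * (1 - E)) 0 := by
  have hg : HasDerivAt (fun p : 𝕜 => (1 - p) * E + p) (1 - E) 0 := by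
    simpa [sub_mul, neg_add_eq_sub] using
      (((hasDerivAt_id' (0 : 𝕜)).const_sub 1).mul_const E).fun_add (hasDerivAt_id' 0)
  simpa using ((hasDerivAt_id' (0 : 𝕜)).const_sub 1).fun_mul (hg.fun_pow (n + 1))

end

theorem div_eq_inv_iff_eq_mul {G : Type*} [GroupWithZero G] {a b t : G} (ha : a ≠ 0) :
    a / b = t⁻¹ ↔ b = t * a := by
  rw [← inv_inj, inv_inv, inv_div, div_eq_iff ha]

theorem neg_pow_succ_add_mul_pow_eq_zero_iff {E : ℝ} (hE : E ≠ 0) (n : ℕ) :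
    -E ^ (n + 1) + (n + 1) * E ^ n * (1 - E) = 0 ↔ E = (n + 1) / (n + 2) := by
  have hfactor : -E ^ (n + 1) + (n + 1) * E ^ n * (1 - E) = E ^ n * ((n + 1) - (n + 2) * E) := by
    ring
  rw [hfactor, mul_eq_zero, or_iff_right (pow_ne_zero n hE), eq_div_iff (by positivity)]
  constructor <;> intro h <;> linarith

theorem snt_conditions_iff {μ α E : ℝ} (hα : α ≠ 0) (hE : E ≠ 0) (n : ℕ) :
    (-μ + α * (n + 2) * E ^ (n + 1) = 0 ∧
        2 * (α * (n + 2)) * (-E ^ (n + 1) + (n + 1) * E ^ n * (1 - E)) = 0) ↔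
      (α / μ = ((n : ℝ) + 2)⁻¹ * ((n + 2) / (n + 1)) ^ (n + 1) ∧ E = (n + 1) / (n + 2)) := by
  have hratio : ((n : ℝ) + 2)⁻¹ * ((n + 2) / (n + 1)) ^ (n + 1) =
      (((n : ℝ) + 2) * ((n + 1) / (n + 2)) ^ (n + 1))⁻¹ := by
    rw [mul_inv, ← inv_pow, inv_div]
  have hαn : 2 * (α * (n + 2)) ≠ 0 := mul_ne_zero two_ne_zero (mul_ne_zero hα (by positivity))
  rw [mul_eq_zero, or_iff_right hαn, neg_pow_succ_add_mul_pow_eq_zero_iff hE, hratio,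
    div_eq_inv_iff_eq_mul hα]
  refine and_congr_left fun hEn => ?_
  rw [← hEn]
  constructor <;> intro h <;> linarith

theorem stmt6_general (k : ℕ) (hk : 2 ≤ k) (μ α β : ℝ) (hα : 0 < α)
    (R : ℝ → ℝ)
    (hR : ∀ p, R p = -μ * p + (1 - p) * α * k * p * ((1 - p) * Real.exp β + p) ^ (k - 1)) :
    (R 0 = 0 ∧ deriv R 0 = 0 ∧ deriv (deriv R) 0 = 0) ↔
      (α / μ = (1 / k) * ((k : ℝ) / ((k : ℝ) - 1)) ^ (k - 1) ∧
        β = Real.log (((k : ℝ) - 1) / k)) := by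
  obtain ⟨n, rfl⟩ : ∃ n, k = n + 2 := ⟨k - 2, by omega⟩
  set E := exp β with hE
  set H : ℝ → ℝ := fun p => -μ + α * (n + 2) * ((1 - p) * ((1 - p) * E + p) ^ (n + 1))
  have hRH : R = fun p => p * H p := funext fun p => by rw [hR]; push_cast; ring
  have hH : ContDiff ℝ 2 H := by fun_prop
  have hR0 : R 0 = 0 := by simp [hRH]
  have hR1 : deriv R 0 = -μ + α * (n + 2) * E ^ (n + 1) := by
    rw [hRH, deriv_id_mul (hH.differentiable two_ne_zero)]
    simp [H]
  have hR2 : deriv (deriv R) 0 =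
      2 * (α * (n + 2)) * (-E ^ (n + 1) + (n + 1) * E ^ n * (1 - E)) := by
    rw [hRH, deriv_deriv_id_mul_zero hH,
      (((hasDerivAt_one_sub_mul_pow_succ_zero E n).const_mul (α * (n + 2))).const_add (-μ)).deriv,
      ← mul_assoc]
  have hβ : β = log ((n + 1) / (n + 2)) ↔ E = (n + 1) / (n + 2) := by
    rw [hE, ← exp_eq_exp, exp_log (by positivity)]
  push_cast
  rw [show (n : ℝ) + 2 - 1 = n + 1 by ring, one_div, hR1, hR2, hβ, eq_true hR0, true_and]
  exact snt_conditions_iff hα.ne' (exp_pos β).ne' n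

theorem stmt6 (k : ℕ) (hk : 2 ≤ k) (μ α β : ℝ) (hμ : 0 < μ) (hα : 0 < α)
    (R : ℝ → ℝ)
    (hR : ∀ p, R p = -μ * p + (1 - p) * α * k * p * ((1 - p) * Real.exp β + p) ^ (k - 1)) :
    (R 0 = 0 ∧ deriv R 0 = 0 ∧ deriv (deriv R) 0 = 0) ↔
      (α / μ = (1 / k) * ((k : ℝ) / ((k : ℝ) - 1)) ^ (k - 1) ∧
        β = Real.log (((k : ℝ) - 1) / k)) :=
  stmt6_general k hk μ α β hα R hR
end

section
/- For continuous-time I-synergy with k ≥ 2 and β ≥ ln(k/(k-1)), the saddle-node condition R(p*) = R'(p*) = 0 with p* ∈ (0,1) for R(p) = -μ p + (1-p) α k p (1-p+p e^β)^{k-1} is satisfied with α/μ = (k/(k-1))^{k-1} (e^β - 1) e^{-βk} and p* = 1 - 1/(k(1 - e^{-β})). -/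
/-!
Write `R p = p * (g p - μ)` with the per-capita rate `g p = α k (1 - p) (1 - p + p e^β)^(k-1)`;
then `R p* = R' p* = 0` amounts to `g p* = μ` and `g' p* = 0`. The point `p*` is characterised by
`k (e^β - 1) (1 - p*) = e^β`, which makes `1 - p* + p* e^β = e^β (k - 1) / k` equal to
`(1 - p*) (k - 1) (e^β - 1)`: this kills `g' p*`, and the value of `α / μ` is what makes `g p* = μ`.
-/

lemma hasDerivAt_one_sub_mul_mul_pow (b E p : ℝ) (n : ℕ) :
    HasDerivAt (fun p => (1 - p) * b * (1 - p + p * E) ^ (n + 1))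
      (b * (1 - p + p * E) ^ n * ((1 - p) * (n + 1) * (E - 1) - (1 - p + p * E))) p := by
  have hA : HasDerivAt (fun p => 1 - p + p * E) (E - 1) p :=
    (((hasDerivAt_id p).const_sub 1).add ((hasDerivAt_id p).mul_const E)).congr_deriv (by ring)
  refine (((hasDerivAt_id p).const_sub 1).mul_const b |>.fun_mul (hA.fun_pow (n + 1))).congr_deriv ?_
  simp only [id, Nat.add_sub_cancel]
  push_cast
  ring

lemma hasDerivAt_mul_sub_of_hasDerivAt_zero {g : ℝ → ℝ} {q μ : ℝ} (hg : HasDerivAt g 0 q)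
    (hq : g q = μ) : HasDerivAt (fun p => p * (g p - μ)) 0 q :=
  ((hasDerivAt_id q).fun_mul (hg.sub_const μ)).congr_deriv (by simp [hq])

lemma mul_sub_one_mul_one_div {c E : ℝ} (hc : c ≠ 0) (hE : E ≠ 0) (hE1 : E ≠ 1) :
    c * (E - 1) * (1 / (c * (1 - E⁻¹))) = E := by
  have : E - 1 ≠ 0 := sub_ne_zero.mpr hE1
  field_simp

section
variable {c E q : ℝ} (hq : c * (E - 1) * (1 - q) = E)
include hq

lemma mul_one_sub_add_mul_eq : c * (1 - q + q * E) = E * (c - 1) := by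
  linear_combination -hq

lemma one_sub_mul_mul_pow_eq (μ : ℝ) (n : ℕ) (hc1 : c - 1 ≠ 0) (hE : E ≠ 0) :
    (1 - q) * (μ * (c / (c - 1)) ^ (n + 1) * (E - 1) * (E ^ (n + 2))⁻¹ * c) *
      (1 - q + q * E) ^ (n + 1) = μ := by
  have hpow : (c / (c - 1)) ^ (n + 1) * (1 - q + q * E) ^ (n + 1) = E ^ (n + 1) := by
    rw [← mul_pow, div_mul_eq_mul_div, mul_one_sub_add_mul_eq hq, mul_div_cancel_right₀ _ hc1]
  calc _ = μ * (c * (E - 1) * (1 - q)) * ((c / (c - 1)) ^ (n + 1) * (1 - q + q * E) ^ (n + 1)) *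
        (E ^ (n + 2))⁻¹ := by ring
    _ = μ := by rw [hq, hpow]; field_simp; ring

lemma one_sub_mul_mul_sub_one_eq (hc : c ≠ 0) :
    (1 - q) * (c - 1) * (E - 1) = 1 - q + q * E :=
  mul_left_cancel₀ hc <| by linear_combination (c - 1) * hq - mul_one_sub_add_mul_eq hq

end

theorem stmt8_general (k : ℕ) (hk : 2 ≤ k) (μ α β : ℝ) (hμ : 0 < μ)
    (hβ : Real.log ((k : ℝ) / ((k : ℝ) - 1)) ≤ β)
    (hαSN : α / μ = ((k : ℝ) / ((k : ℝ) - 1)) ^ (k - 1) * (Real.exp β - 1) * Real.exp (-β * k))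
    (R : ℝ → ℝ)
    (hR : ∀ p, R p = -μ * p + (1 - p) * α * k * p * (1 - p + p * Real.exp β) ^ (k - 1))
    (ps : ℝ) (hps : ps = 1 - 1 / (k * (1 - Real.exp (-β)))) :
    R ps = 0 ∧ deriv R ps = 0 := by
  obtain ⟨n, rfl⟩ : ∃ n, k = n + 2 := ⟨k - 2, by omega⟩
  rw [show n + 2 - 1 = n + 1 by omega] at hαSN hR
  rw [Real.exp_neg] at hps
  rw [div_eq_iff hμ.ne', neg_mul, Real.exp_neg, mul_comm β, Real.exp_nat_mul] at hαSN
  set E := Real.exp β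
  set c : ℝ := ((n + 2 : ℕ) : ℝ)
  have hc : c - 1 = n + 1 := by push_cast [c]; ring
  have hc1 : 0 < c - 1 := by rw [hc]; positivity
  have hc0 : c ≠ 0 := by linarith
  have hE : 1 < E := Real.one_lt_exp_iff.mpr <|
    (Real.log_pos <| by rw [lt_div_iff₀ hc1]; linarith).trans_le hβ
  have hq : c * (E - 1) * (1 - ps) = E := by
    rw [hps, sub_sub_cancel]
    exact mul_sub_one_mul_one_div hc0 (by positivity) hE.ne'
  have hα : α = μ * (c / (c - 1)) ^ (n + 1) * (E - 1) * (E ^ (n + 2))⁻¹ := by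
    rw [hαSN]
    ring
  set g := fun p => (1 - p) * (α * c) * (1 - p + p * E) ^ (n + 1)
  have hRg : R = fun p => p * (g p - μ) := funext fun p => by rw [hR]; simp only [g]; ring
  have hg : g ps = μ := by
    simpa only [g, hα] using one_sub_mul_mul_pow_eq hq μ n hc1.ne' (by positivity)
  have hg' : HasDerivAt g 0 ps := (hasDerivAt_one_sub_mul_mul_pow _ E ps n).congr_deriv <| by
    rw [← hc, one_sub_mul_mul_sub_one_eq hq hc0, sub_self, mul_zero]
  rw [hRg]
  exact ⟨by simp [hg], (hasDerivAt_mul_sub_of_hasDerivAt_zero hg' hg).deriv⟩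

theorem stmt8 (k : ℕ) (hk : 2 ≤ k) (μ α β : ℝ) (hμ : 0 < μ) (hα : 0 < α)
    (hβ : Real.log ((k : ℝ) / ((k : ℝ) - 1)) ≤ β)
    (hαSN : α / μ = ((k : ℝ) / ((k : ℝ) - 1)) ^ (k - 1) * (Real.exp β - 1) * Real.exp (-β * k))
    (R : ℝ → ℝ)
    (hR : ∀ p, R p = -μ * p + (1 - p) * α * k * p * (1 - p + p * Real.exp β) ^ (k - 1))
    (ps : ℝ) (hps : ps = 1 - 1 / (k * (1 - Real.exp (-β)))) :
    R ps = 0 ∧ deriv R ps = 0 :=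
  stmt8_general k hk μ α β hμ hβ hαSN R hR ps hps
end

section
/- For continuous-time dynamics with k > 2 and transmission rates Λ_n = n λ_n, the coefficient condition c > 0 in the normal form, equivalent to (k-2)λ₃ - 2(k-1)λ₂ + k λ₁ < 0, holds for S-synergy rates λ_n = α e^{β(k-n)} for every α > 0 and every β ∈ (-ln(k/(k-2)), 0). -/
theorem stmt15 (k : ℕ) (hk : 2 < k) (α β : ℝ) (hα : 0 < α)
    (hβ : β ∈ Set.Ioo (-Real.log ((k : ℝ) / ((k : ℝ) - 2))) 0)
    (lam : ℕ → ℝ) (hlam : ∀ n, lam n = α * Real.exp (β * ((k : ℝ) - n))) :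
    ((k : ℝ) - 2) * lam 3 - 2 * ((k : ℝ) - 1) * lam 2 + (k : ℝ) * lam 1 < 0 := by
  obtain ⟨hβ1, hβ2⟩ := hβ
  have hk2 : (0:ℝ) < (k:ℝ) - 2 := by
    have : (2:ℝ) < k := by exact_mod_cast hk
    linarith
  have hkpos : (0:ℝ) < k := by linarith
  rw [hlam, hlam, hlam]
  set x := Real.exp β with hx
  have hx1 : x < 1 := Real.exp_lt_one_iff.mpr hβ2
  have hx2 : ((k:ℝ) - 2) / k < x := by
    have hlogeq : -Real.log ((k:ℝ) / ((k:ℝ) - 2)) = Real.log (((k:ℝ) - 2) / k) := by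
      rw [← Real.log_inv]
      congr 1
      field_simp
    rw [hlogeq] at hβ1
    calc ((k:ℝ) - 2) / k = Real.exp (Real.log (((k:ℝ) - 2) / k)) :=
          (Real.exp_log (by positivity)).symm
      _ < x := Real.exp_lt_exp.mpr hβ1
  have hkx : (k:ℝ) - 2 < (k:ℝ) * x := by
    have := (div_lt_iff₀ hkpos).mp hx2
    linarith
  have e1 : Real.exp (β * ((k:ℝ) - 2)) = Real.exp (β * ((k:ℝ) - 3)) * x := by
    rw [hx, ← Real.exp_add]
    ring_nf
  have e2 : Real.exp (β * ((k:ℝ) - 1)) = Real.exp (β * ((k:ℝ) - 3)) * x ^ 2 := by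
    rw [hx, pow_two, ← Real.exp_add, ← Real.exp_add]
    ring_nf
  push_cast
  rw [e1, e2]
  have hE : 0 < Real.exp (β * ((k:ℝ) - 3)) := Real.exp_pos _
  have key : (k:ℝ) * x ^ 2 - 2 * ((k:ℝ) - 1) * x + ((k:ℝ) - 2) < 0 := by
    nlinarith [mul_pos (sub_pos.mpr hx1) (sub_pos.mpr hkx)]
  nlinarith [mul_pos hα hE, mul_pos (mul_pos hα hE) (neg_pos.mpr key)]
end

section
/- For continuous-time dynamics with k > 2, the condition (k-2)λ₃ - 2(k-1)λ₂ + k λ₁ < 0 holds for I-synergy rates λ_n = α e^{β(n-1)} for every α > 0 and every β ∈ (0, ln(k/(k-2))). -/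
theorem stmt16 (k : ℕ) (hk : 2 < k) (α β : ℝ) (hα : 0 < α)
    (hβ : β ∈ Set.Ioo 0 (Real.log ((k : ℝ) / ((k : ℝ) - 2))))
    (lam : ℕ → ℝ) (hlam : ∀ n, lam n = α * Real.exp (β * ((n : ℝ) - 1))) :
    ((k : ℝ) - 2) * lam 3 - 2 * ((k : ℝ) - 1) * lam 2 + (k : ℝ) * lam 1 < 0 := by
  obtain ⟨hβ0, hβ1⟩ := hβ
  have hk2 : (2 : ℝ) < (k : ℝ) := by exact_mod_cast hk
  have hkpos : (0 : ℝ) < (k : ℝ) / ((k : ℝ) - 2) := div_pos (by linarith) (by linarith)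
  have hx1 : 1 < Real.exp β := by simpa using Real.exp_lt_exp.mpr hβ0
  have hx2 : Real.exp β < (k : ℝ) / ((k : ℝ) - 2) := by
    calc Real.exp β < Real.exp (Real.log ((k : ℝ) / ((k : ℝ) - 2))) :=
          Real.exp_lt_exp.mpr hβ1
      _ = (k : ℝ) / ((k : ℝ) - 2) := Real.exp_log hkpos
  have hx2' : ((k : ℝ) - 2) * Real.exp β < (k : ℝ) := by
    rw [lt_div_iff₀ (by linarith)] at hx2; linarith
  rw [hlam 1, hlam 2, hlam 3]
  have h3 : Real.exp (β * ((3 : ℕ) - 1)) = Real.exp β * Real.exp β := by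
    push_cast; rw [← Real.exp_add]; ring_nf
  have h2 : Real.exp (β * ((2 : ℕ) - 1)) = Real.exp β := by push_cast; ring_nf
  have h1 : Real.exp (β * ((1 : ℕ) - 1)) = 1 := by push_cast; simp
  rw [h1, h2, h3]
  nlinarith [mul_pos hα (sub_pos.mpr hx1), sub_pos.mpr hx1]
end
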